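/- arXiv:2203.13567 — 2 statements merged into one kernel-verified Lean document; each statement's English description precedes it below -/
import Mathlib

section
/- Let $f : \mathbb{R} \to \mathbb{R}$ be differentiable. Then for all $x, y \in \mathbb{R}$ with $y \neq 0$, the kernel identity $\frac{\partial}{\partial x}\left(\frac{f(x)-f(x-y) - y f'(x-y)}{y^2 + (f(x)-f(x-y))^2}\right) = \frac{\partial}{\partial y}\left(\frac{-y\,(f'(x)-f'(x-y))}{y^2 + (f(x)-f(x-y))^2}\right)$ holds, provided $f$ is twice differentiable at the relevant points. -/
/-!
Write `δ = f x - f (x - y)` and `D = y ^ 2 + δ ^ 2`. Both sides are quotient-rule derivatives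
over `D ^ 2`, and the difference of their numerators is `2 (f' x - f' (x - y))` times
`D - δ ^ 2 - y ^ 2 = 0`. Only the derivative of `f'` at `x - y` enters, so the kernels are
differentiated with an arbitrary `g` in place of `f'`.
-/

section Kernels

variable {f g : ℝ → ℝ} {x y a b c : ℝ}

theorem hasDerivAt_kernel_fst (hfx : HasDerivAt f a x) (hfxy : HasDerivAt f b (x - y))
    (hg : HasDerivAt g c (x - y)) (hD : y ^ 2 + (f x - f (x - y)) ^ 2 ≠ 0) :
    HasDerivAt (fun t => (f t - f (t - y) - y * g (t - y)) / (y ^ 2 + (f t - f (t - y)) ^ 2))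
      (((a - b - y * c) * (y ^ 2 + (f x - f (x - y)) ^ 2)
          - (f x - f (x - y) - y * g (x - y)) * (2 * (f x - f (x - y)) * (a - b)))
        / (y ^ 2 + (f x - f (x - y)) ^ 2) ^ 2) x := by
  have hδ : HasDerivAt (fun t => f t - f (t - y)) (a - b) x :=
    hfx.sub (hfxy.comp_sub_const x y)
  have hnum : HasDerivAt (fun t => f t - f (t - y) - y * g (t - y)) (a - b - y * c) x :=
    hδ.sub ((hg.comp_sub_const x y).const_mul y)
  have hden : HasDerivAt (fun t => y ^ 2 + (f t - f (t - y)) ^ 2)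
      (2 * (f x - f (x - y)) * (a - b)) x := by
    simpa using (hδ.pow 2).const_add (y ^ 2)
  exact hnum.div hden hD

theorem hasDerivAt_kernel_snd (hfxy : HasDerivAt f b (x - y)) (hg : HasDerivAt g c (x - y))
    (hD : y ^ 2 + (f x - f (x - y)) ^ 2 ≠ 0) :
    HasDerivAt (fun u => -(u * (g x - g (x - u))) / (u ^ 2 + (f x - f (x - u)) ^ 2))
      ((-(g x - g (x - y) + y * c) * (y ^ 2 + (f x - f (x - y)) ^ 2)
          + y * (g x - g (x - y)) * (2 * y + 2 * (f x - f (x - y)) * b))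
        / (y ^ 2 + (f x - f (x - y)) ^ 2) ^ 2) y := by
  have hnum : HasDerivAt (fun u => -(u * (g x - g (x - u)))) (-(g x - g (x - y) + y * c)) y :=
    (((hasDerivAt_id' y).mul ((hg.comp_const_sub x y).const_sub (g x))).neg).congr_deriv
      (by ring)
  have hden : HasDerivAt (fun u => u ^ 2 + (f x - f (x - u)) ^ 2)
      (2 * y + 2 * (f x - f (x - y)) * b) y :=
    (((hasDerivAt_id' y).pow 2).add
      (((hfxy.comp_const_sub x y).const_sub (f x)).pow 2)).congr_deriv (by ring)
  exact (hnum.div hden hD).congr_deriv (by ring)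

end Kernels

theorem kernel_numerator_identity (y δ a b c : ℝ) :
    (a - b - y * c) * (y ^ 2 + δ ^ 2) - (δ - y * b) * (2 * δ * (a - b))
      = -(a - b + y * c) * (y ^ 2 + δ ^ 2) + y * (a - b) * (2 * y + 2 * δ * b) := by
  ring

theorem kernel_identity_A (f : ℝ → ℝ) (hf : Differentiable ℝ f)
    (hf' : Differentiable ℝ (deriv f)) :
    ∀ x y : ℝ, y ≠ 0 →
      deriv (fun t => (f t - f (t - y) - y * deriv f (t - y)) /
          (y ^ 2 + (f t - f (t - y)) ^ 2)) x
        = deriv (fun u => (-(u * (deriv f x - deriv f (x - u)))) /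
          (u ^ 2 + (f x - f (x - u)) ^ 2)) y := by
  intro x y hy
  have hD : y ^ 2 + (f x - f (x - y)) ^ 2 ≠ 0 := by positivity
  have hfxy := (hf (x - y)).hasDerivAt
  have hf'xy := (hf' (x - y)).hasDerivAt
  rw [(hasDerivAt_kernel_fst (hf x).hasDerivAt hfxy hf'xy hD).deriv,
    (hasDerivAt_kernel_snd hfxy hf'xy hD).deriv, kernel_numerator_identity]
end

section
/- Let $f : \mathbb{R} \to \mathbb{R}$ be twice differentiable. Then for all $x, y \in \mathbb{R}$ with $y \neq 0$, one has $\frac{\partial}{\partial x}\left(\frac{y + f'(x-y)(f(x)-f(x-y))}{y^2 + (f(x)-f(x-y))^2}\right) = \frac{\partial}{\partial y}\left(\frac{(f(x)-f(x-y))(f'(x)-f'(x-y))}{y^2 + (f(x)-f(x-y))^2}\right)$. -/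
/-!
Both sides are mixed second derivatives of `½ log (y² + (δf)²)`, whose first partials are exactly
the two fractions. Concretely, writing `δ = f x - f (x - y)`, `e = f' x - f' (x - y)`,
`p = f' (x - y)`, `q = f'' (x - y)` and `D = y² + δ²`, the quotient rule gives
`((p e + q δ) D - 2 δ e (y + p δ)) / D²` for both sides.
-/

section

variable {f g : ℝ → ℝ} {x y a b q : ℝ}

theorem HasDerivAt.sub_comp_sub_const (hx : HasDerivAt f a x) (hxy : HasDerivAt f b (x - y)) :
    HasDerivAt (fun t => f t - f (t - y)) (a - b) x :=
  hx.sub (hxy.comp_sub_const x y)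

theorem HasDerivAt.const_sub_comp_const_sub (hxy : HasDerivAt f b (x - y)) :
    HasDerivAt (fun u => f x - f (x - u)) b y := by
  simpa using (hxy.comp_const_sub x y).const_sub (f x)

theorem hasDerivAt_kernel_left (hfx : HasDerivAt f (g x) x)
    (hfxy : HasDerivAt f (g (x - y)) (x - y)) (hgxy : HasDerivAt g q (x - y)) (hy : y ≠ 0) :
    HasDerivAt (fun t => (y + g (t - y) * (f t - f (t - y))) / (y ^ 2 + (f t - f (t - y)) ^ 2))
      (((g (x - y) * (g x - g (x - y)) + q * (f x - f (x - y))) * (y ^ 2 + (f x - f (x - y)) ^ 2)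
        - 2 * (f x - f (x - y)) * (g x - g (x - y)) * (y + g (x - y) * (f x - f (x - y)))) /
        (y ^ 2 + (f x - f (x - y)) ^ 2) ^ 2) x := by
  have hδ := hfx.sub_comp_sub_const hfxy
  have hnum := ((hgxy.comp_sub_const x y).fun_mul hδ).const_add y
  have hden := (hδ.fun_pow 2).const_add (y ^ 2)
  refine (hnum.fun_div hden (by positivity)).congr_deriv ?_
  push_cast
  ring

theorem hasDerivAt_kernel_right (hfxy : HasDerivAt f (g (x - y)) (x - y))
    (hgxy : HasDerivAt g q (x - y)) (hy : y ≠ 0) :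
    HasDerivAt (fun u => ((f x - f (x - u)) * (g x - g (x - u))) / (u ^ 2 + (f x - f (x - u)) ^ 2))
      (((g (x - y) * (g x - g (x - y)) + q * (f x - f (x - y))) * (y ^ 2 + (f x - f (x - y)) ^ 2)
        - 2 * (f x - f (x - y)) * (g x - g (x - y)) * (y + g (x - y) * (f x - f (x - y)))) /
        (y ^ 2 + (f x - f (x - y)) ^ 2) ^ 2) y := by
  have hδ := hfxy.const_sub_comp_const_sub
  have hnum := hδ.fun_mul hgxy.const_sub_comp_const_sub
  have hden := (hasDerivAt_pow 2 y).fun_add (hδ.fun_pow 2)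
  refine (hnum.fun_div hden (by positivity)).congr_deriv ?_
  push_cast
  ring

end

theorem kernel_identity_B (f : ℝ → ℝ) (hf : Differentiable ℝ f)
    (hf' : Differentiable ℝ (deriv f)) :
    ∀ x y : ℝ, y ≠ 0 →
      deriv (fun t => (y + deriv f (t - y) * (f t - f (t - y))) /
          (y ^ 2 + (f t - f (t - y)) ^ 2)) x
        = deriv (fun u => ((f x - f (x - u)) * (deriv f x - deriv f (x - u))) /
          (u ^ 2 + (f x - f (x - u)) ^ 2)) y := by
  intro x y hy
  have hfxy := (hf (x - y)).hasDerivAt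
  have hgxy := (hf' (x - y)).hasDerivAt
  rw [(hasDerivAt_kernel_left (hf x).hasDerivAt hfxy hgxy hy).deriv,
    (hasDerivAt_kernel_right hfxy hgxy hy).deriv]
end
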